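/- arXiv:math/0405083 — 6 statements merged into one kernel-verified Lean document; each statement's English description precedes it below -/
import Mathlib

section
/- Ramanujan's tau function satisfies the recursion n·τ(n+1) + 24·∑_{k=1}^{n} τ(n+1-k)·σ(k) = 0 for all n ≥ 1. -/
open PowerSeries Finset
noncomputable def geo (m : ℕ) : ℤ⟦X⟧ := PowerSeries.mk fun j => if m ∣ j then 1 else 0
lemma geo_mul (m : ℕ) (hm : 1 ≤ m) : (1 - X ^ m) * geo m = 1 := by
  ext k
  rw [sub_mul, one_mul, map_sub, coeff_X_pow_mul', geo]
  simp only [coeff_mk, coeff_one]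
  rcases Nat.eq_zero_or_pos k with rfl | hk
  · rw [if_pos (dvd_zero m), if_neg (show ¬ m ≤ 0 by omega), if_pos rfl]; ring
  · rw [if_neg (show ¬ k = 0 by omega)]
    by_cases h2 : m ≤ k
    · rw [if_pos h2]
      have hiff : m ∣ k ↔ m ∣ k - m :=
        ⟨fun hd => Nat.dvd_sub hd dvd_rfl,
         fun hd => by have := Nat.dvd_add hd (dvd_refl m); rwa [Nat.sub_add_cancel h2] at this⟩
      by_cases h1 : m ∣ k
      · rw [if_pos h1, if_pos (hiff.mp h1)]; ring
      · rw [if_neg h1, if_neg (fun c => h1 (hiff.mpr c))]; ring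
    · rw [if_neg h2, if_neg (fun hd => h2 (Nat.le_of_dvd hk hd))]; ring

-- derivative of one factor
lemma deriv_factor (m : ℕ) (hm : 1 ≤ m) :
    X * (PowerSeries.derivative ℤ ((1 - X ^ m) ^ 24)) =
      -24 * ((1 - X ^ m) ^ 24 * ((m : ℤ⟦X⟧) * (X ^ m * geo m))) := by
  have h23 : (1 - X ^ m) ^ 24 * geo m = (1 - X ^ m) ^ 23 := by
    rw [pow_succ, mul_assoc, geo_mul m hm, mul_one]
  rw [Derivation.leibniz_pow]
  have hdx : PowerSeries.derivative ℤ (1 - X ^ m : ℤ⟦X⟧) = -((m : ℤ⟦X⟧) * X ^ (m - 1)) := by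
    rw [map_sub, Derivation.leibniz_pow, PowerSeries.derivative_X]
    simp [smul_eq_mul, Nat.cast_smul_eq_nsmul]
  have hx : (X : ℤ⟦X⟧) * X ^ (m - 1) = X ^ m := by
    rw [← pow_succ']; congr 1; omega
  rw [hdx]
  simp only [smul_eq_mul, nsmul_eq_mul]
  push_cast
  linear_combination (-(24:ℤ⟦X⟧) * (m : ℤ⟦X⟧) * (1 - X ^ m) ^ 23) * hx
    + ((24:ℤ⟦X⟧) * (m : ℤ⟦X⟧) * X ^ m) * h23

lemma deriv_prod (s : Finset ℕ) (hs : ∀ m ∈ s, 1 ≤ m) :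
    X * (PowerSeries.derivative ℤ (∏ m ∈ s, (1 - X ^ m) ^ 24)) =
      -24 * (∏ m ∈ s, (1 - X ^ m) ^ 24) * (∑ m ∈ s, (m : ℤ⟦X⟧) * (X ^ m * geo m)) := by
  induction s using Finset.induction_on with
  | empty => simp
  | @insert a s' ha ih =>
    rw [Finset.prod_insert ha, Finset.sum_insert ha, Derivation.leibniz]
    have h1 := deriv_factor a (hs a (Finset.mem_insert_self a s'))
    have h2 := ih (fun m hm => hs m (Finset.mem_insert_of_mem hm))
    simp only [smul_eq_mul]
    linear_combination (∏ m ∈ s', (1 - X ^ m) ^ 24) * h1 + ((1 - X ^ a) ^ 24) * h2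

lemma coeff_stable (j M : ℕ) (h : j ≤ M) :
    (PowerSeries.coeff (R := ℤ) j) (X * ∏ m ∈ Finset.Icc 1 M, (1 - X ^ m) ^ 24) =
    (PowerSeries.coeff (R := ℤ) j) (X * ∏ m ∈ Finset.Icc 1 j, (1 - X ^ m) ^ 24) := by
  induction M, h using Nat.le_induction with
  | base => rfl
  | succ M hM ih =>
    rw [← ih, Finset.prod_Icc_succ_top (by omega)]
    have hdvd : (X : ℤ⟦X⟧) ^ (M + 1) ∣ ((1 - X ^ (M + 1)) ^ 24 - 1) := by
      have := sub_dvd_pow_sub_pow (1 - (X : ℤ⟦X⟧) ^ (M + 1)) 1 24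
      simp only [one_pow] at this
      have h2 : (1 - (X : ℤ⟦X⟧) ^ (M + 1)) - 1 = -(X ^ (M+1)) := by ring
      rw [h2, neg_dvd] at this
      exact this
    have key : (PowerSeries.coeff (R := ℤ) j)
        (X * ((∏ m ∈ Finset.Icc 1 M, (1 - X ^ m) ^ 24) * ((1 - X ^ (M+1)) ^ 24 - 1))) = 0 := by
      obtain ⟨c, hc⟩ := hdvd
      rw [hc]
      have : (X : ℤ⟦X⟧) * ((∏ m ∈ Finset.Icc 1 M, (1 - X ^ m) ^ 24) * (X ^ (M+1) * c)) =
          X ^ (M+1) * (X * (∏ m ∈ Finset.Icc 1 M, (1 - X ^ m) ^ 24) * c) := by ring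
      rw [this, coeff_X_pow_mul']
      rw [if_neg (by omega)]
    have expand : (X : ℤ⟦X⟧) * ((∏ m ∈ Finset.Icc 1 M, (1 - X ^ m) ^ 24) * (1 - X ^ (M+1)) ^ 24)
        = X * ((∏ m ∈ Finset.Icc 1 M, (1 - X ^ m) ^ 24) * ((1 - X ^ (M+1)) ^ 24 - 1))
          + X * (∏ m ∈ Finset.Icc 1 M, (1 - X ^ m) ^ 24) := by ring
    rw [expand, map_add, key, zero_add]

lemma coeff_term (m j : ℕ) (hm : 1 ≤ m) (hj : 1 ≤ j) :
    (PowerSeries.coeff (R := ℤ) j) ((m : ℤ⟦X⟧) * (X ^ m * geo m)) = if m ∣ j then (m : ℤ) else 0 := by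
  have hc : ((m : ℕ) : ℤ⟦X⟧) = PowerSeries.C (R := ℤ) ((m : ℕ) : ℤ) := by
    simp [map_natCast]
  rw [hc, coeff_C_mul, coeff_X_pow_mul', geo]
  simp only [coeff_mk]
  by_cases h2 : m ≤ j
  · rw [if_pos h2]
    have hiff : m ∣ j ↔ m ∣ j - m :=
      ⟨fun hd => Nat.dvd_sub hd dvd_rfl,
       fun hd => by have := Nat.dvd_add hd (dvd_refl m); rwa [Nat.sub_add_cancel h2] at this⟩
    by_cases h1 : m ∣ j
    · rw [if_pos (hiff.mp h1), if_pos h1]; ring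
    · rw [if_neg (fun c => h1 (hiff.mpr c)), if_neg h1]; ring
  · rw [if_neg h2, if_neg (fun hd => h2 (Nat.le_of_dvd hj hd))]; ring

lemma coeff_S (j N : ℕ) (hj : 1 ≤ j) (hjN : j ≤ N) :
    (PowerSeries.coeff (R := ℤ) j) (∑ m ∈ Finset.Icc 1 N, (m : ℤ⟦X⟧) * (X ^ m * geo m)) =
      ∑ d ∈ j.divisors, (d : ℤ) := by
  rw [map_sum]
  rw [Finset.sum_congr rfl (fun m hm => coeff_term m j (Finset.mem_Icc.mp hm).1 hj)]
  rw [← Finset.sum_filter]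
  congr 1
  ext m
  simp only [Finset.mem_filter, Finset.mem_Icc, Nat.mem_divisors]
  constructor
  · rintro ⟨⟨h1, h2⟩, h3⟩; exact ⟨h3, by omega⟩
  · rintro ⟨h1, h2⟩
    have hm1 : 1 ≤ m := Nat.one_le_iff_ne_zero.mpr (fun c => by subst c; simp at h1; omega)
    exact ⟨⟨hm1, le_trans (Nat.le_of_dvd (by omega) h1) hjN⟩, h1⟩

/-- Ramanujan's recursion: if `tau` is Ramanujan's τ-function, i.e. the coefficients of
`q·∏_{m ≥ 1}(1-q^m)^{24}` (characterized coefficientwise via truncated products, which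
determine the coefficients of the infinite product), then for all `n ≥ 1`,
`n·τ(n+1) + 24·∑_{k=1}^n τ(n+1-k)·σ(k) = 0`. -/
theorem ramanujan_tau_recursion
    (tau : ℕ → ℤ)
    (htau : ∀ N : ℕ,
      (PowerSeries.coeff (R := ℤ) N)
        (PowerSeries.X * ∏ m ∈ Finset.Icc 1 N, (1 - PowerSeries.X ^ m) ^ 24) = tau N) :
    ∀ n : ℕ, 1 ≤ n →
      (n : ℤ) * tau (n + 1)
        + 24 * ∑ k ∈ Finset.Icc 1 n, tau (n + 1 - k) * (∑ d ∈ k.divisors, (d : ℤ)) = 0 := by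
  intro n hn
  set N := n + 1 with hN
  set P : ℤ⟦X⟧ := ∏ m ∈ Finset.Icc 1 N, (1 - X ^ m) ^ 24 with hPdef
  set F : ℤ⟦X⟧ := X * P with hFdef
  set S : ℤ⟦X⟧ := ∑ m ∈ Finset.Icc 1 N, (m : ℤ⟦X⟧) * (X ^ m * geo m) with hSdef
  -- tau 0 = 0
  have htau0 : tau 0 = 0 := by
    have := htau 0
    simp at this
    omega
  -- coeff k F = tau k for k ≤ N
  have hcF : ∀ k : ℕ, k ≤ N → (PowerSeries.coeff (R := ℤ) k) F = tau k := by
    intro k hk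
    rw [hFdef, hPdef, coeff_stable k N hk, htau k]
  -- coeff 0 S = 0
  have hS0 : (PowerSeries.coeff (R := ℤ) 0) S = 0 := by
    rw [hSdef, map_sum]
    apply Finset.sum_eq_zero
    intro m hm
    have hm1 : 1 ≤ m := (Finset.mem_Icc.mp hm).1
    have hc : ((m : ℕ) : ℤ⟦X⟧) = PowerSeries.C (R := ℤ) ((m : ℕ) : ℤ) := by simp [map_natCast]
    rw [hc, coeff_C_mul, coeff_X_pow_mul', if_neg (by omega), mul_zero]
  -- main derivative identity
  have hDF : X * PowerSeries.derivative ℤ F = F - (24 : ℤ) • (F * S) := by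
    have hd := deriv_prod (Finset.Icc 1 N) (fun m hm => (Finset.mem_Icc.mp hm).1)
    rw [hFdef, Derivation.leibniz, PowerSeries.derivative_X]
    simp only [smul_eq_mul, mul_one, zsmul_eq_mul]
    push_cast
    linear_combination (X : ℤ⟦X⟧) * hd
  -- coefficient of F*S
  have hFS : (PowerSeries.coeff (R := ℤ) (n+1)) (F * S) =
      ∑ k ∈ Finset.Icc 1 n, tau (n + 1 - k) * (∑ d ∈ k.divisors, (d : ℤ)) := by
    rw [PowerSeries.coeff_mul]
    rw [Finset.Nat.sum_antidiagonal_eq_sum_range_succ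
      (fun i j => (PowerSeries.coeff (R := ℤ) i) F * (PowerSeries.coeff (R := ℤ) j) S) (n+1)]
    rw [show Finset.range (n + 1 + 1) = Finset.Icc 0 (n+1) by ext x; simp [Nat.lt_succ_iff]]
    rw [← Finset.sum_subset (show Finset.Icc 1 n ⊆ Finset.Icc 0 (n+1) by
        intro x hx; rw [Finset.mem_Icc] at *; omega)
      (by
        intro x hx hx2
        rw [Finset.mem_Icc] at hx hx2
        rcases (show x = 0 ∨ x = n + 1 by omega) with rfl | rfl
        · rw [hcF 0 (by omega), htau0, zero_mul]
        · rw [show n + 1 - (n+1) = 0 by omega, hS0, mul_zero])]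
    apply Finset.sum_nbij' (fun k => n + 1 - k) (fun k => n + 1 - k)
    all_goals intro a ha
    all_goals rw [Finset.mem_Icc] at ha
    all_goals try (rw [Finset.mem_Icc]; omega)
    all_goals try omega
    rw [show n + 1 - (n + 1 - a) = a by omega, hcF a (by omega),
      coeff_S (n+1-a) N (by omega) (by omega)]
  have heq := congrArg (PowerSeries.coeff (R := ℤ) (n+1)) hDF
  rw [PowerSeries.coeff_succ_X_mul, PowerSeries.coeff_derivative, map_sub, map_smul,
    hFS, hcF (n+1) le_rfl] at heq
  rw [smul_eq_mul] at heq
  push_cast at heq ⊢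
  linarith
end

section
/- Let r, F : ℕ → ℚ be arithmetic functions with r(0) = 1 satisfying n·r(n) = ∑_{k=1}^{n} F(k)·r(n-k) for all n ≥ 1. Then r(n) = ∑_{λ ⊢ n} F_λ / z_λ, where the sum is over all partitions λ of n, F_λ = ∏_k F(k)^{m_k(λ)}, and z_λ = ∏_k k^{m_k(λ)} · m_k(λ)!. -/
/-- The invariant `z_λ = ∏_k k^{m_k(λ)}·m_k(λ)!` of a partition. -/
def zPart {n : ℕ} (p : n.Partition) : ℕ :=
  ∏ k ∈ p.parts.toFinset, k ^ p.parts.count k * (p.parts.count k).factorial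

namespace GirardWaringAux

open Finset

/-- z of a multiset -/
def zM (s : Multiset ℕ) : ℕ :=
  ∏ k ∈ s.toFinset, k ^ s.count k * (s.count k).factorial

/-- the weight `F_s / z_s` -/
noncomputable def wM (F : ℕ → ℚ) (s : Multiset ℕ) : ℚ :=
  (∏ k ∈ s.toFinset, F k ^ s.count k) / (zM s : ℚ)

lemma zM_pos {s : Multiset ℕ} (hs : ∀ j ∈ s, 0 < j) : 0 < zM s := by
  apply Finset.prod_pos
  intro k hk
  have hk' : 0 < k := hs k (Multiset.mem_toFinset.mp hk)
  positivity

lemma fac_cons (k : ℕ) (s : Multiset ℕ) :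
    ∏ j ∈ (k ::ₘ s).toFinset, ((k ::ₘ s).count j).factorial
      = (s.count k + 1) * ∏ j ∈ s.toFinset, (s.count j).factorial := by
  by_cases h : k ∈ s
  · have hkf : k ∈ s.toFinset := Multiset.mem_toFinset.mpr h
    rw [Multiset.toFinset_cons, Finset.insert_eq_self.mpr hkf,
        ← Finset.mul_prod_erase _ _ hkf, ← Finset.mul_prod_erase _ _ hkf]
    have hprod : ∏ j ∈ s.toFinset.erase k, ((k ::ₘ s).count j).factorial
        = ∏ j ∈ s.toFinset.erase k, (s.count j).factorial := by
      refine Finset.prod_congr rfl fun j hj => ?_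
      rw [Multiset.count_cons_of_ne (Finset.ne_of_mem_erase hj)]
    rw [hprod, Multiset.count_cons_self, Nat.factorial_succ]
    ring
  · have hc : s.count k = 0 := Multiset.count_eq_zero.mpr h
    have hkf : k ∉ s.toFinset := by simp [h]
    rw [Multiset.toFinset_cons, Finset.prod_insert hkf, Multiset.count_cons_self, hc]
    have hprod : ∏ j ∈ s.toFinset, ((k ::ₘ s).count j).factorial
        = ∏ j ∈ s.toFinset, (s.count j).factorial := by
      refine Finset.prod_congr rfl fun j hj => ?_
      have : j ≠ k := fun hjk => hkf (hjk ▸ hj)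
      rw [Multiset.count_cons_of_ne this]
    rw [hprod]
    simp

lemma zM_cons (k : ℕ) (s : Multiset ℕ) :
    zM (k ::ₘ s) = k * (s.count k + 1) * zM s := by
  unfold zM
  rw [Finset.prod_mul_distrib, Finset.prod_mul_distrib,
      ← Finset.prod_multiset_count, ← Finset.prod_multiset_count,
      Multiset.prod_cons, fac_cons]
  ring

lemma Fprod_cons (F : ℕ → ℚ) (k : ℕ) (s : Multiset ℕ) :
    ∏ j ∈ (k ::ₘ s).toFinset, F j ^ (k ::ₘ s).count j
      = F k * ∏ j ∈ s.toFinset, F j ^ s.count j := by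
  rw [← Finset.prod_multiset_map_count, ← Finset.prod_multiset_map_count,
      Multiset.map_cons, Multiset.prod_cons]

lemma key (F : ℕ → ℚ) (k : ℕ) (s : Multiset ℕ) (hs : ∀ j ∈ s, 0 < j) (hk : 0 < k) :
    (k : ℚ) * ((k ::ₘ s).count k) * wM F (k ::ₘ s) = F k * wM F s := by
  have hz : (zM s : ℚ) ≠ 0 := by exact_mod_cast (zM_pos hs).ne'
  have hkQ : (k : ℚ) ≠ 0 := by exact_mod_cast hk.ne'
  have hcQ : ((s.count k : ℚ) + 1) ≠ 0 := by positivity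
  unfold wM
  rw [zM_cons, Fprod_cons, Multiset.count_cons_self]
  push_cast
  field_simp

/-- insert a part `k` into a partition of `n - k` -/
def consPart {n k : ℕ} (hk : k ∈ Finset.Icc 1 n) (q : (n - k).Partition) : n.Partition where
  parts := k ::ₘ q.parts
  parts_pos := by
    intro i hi
    rcases Multiset.mem_cons.mp hi with rfl | h
    · exact (Finset.mem_Icc.mp hk).1
    · exact q.parts_pos h
  parts_sum := by
    have h := Finset.mem_Icc.mp hk
    rw [Multiset.sum_cons, q.parts_sum]
    omega

/-- erase a part `k` from a partition of `n` -/
def erasePart {n : ℕ} (p : n.Partition) (k : ℕ) (hk : k ∈ p.parts) : (n - k).Partition where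
  parts := p.parts.erase k
  parts_pos := fun h => p.parts_pos (Multiset.mem_of_mem_erase h)
  parts_sum := by
    have h : k + (p.parts.erase k).sum = n := by
      rw [← Multiset.sum_cons, Multiset.cons_erase hk, p.parts_sum]
    omega

lemma S_rec (F : ℕ → ℚ) (n : ℕ) :
    (n : ℚ) * (∑ p : n.Partition, wM F p.parts)
      = ∑ k ∈ Finset.Icc 1 n, F k * ∑ q : (n - k).Partition, wM F q.parts := by
  rw [Finset.mul_sum]
  have step1 : ∀ p : n.Partition, (n : ℚ) * wM F p.parts
      = ∑ k ∈ p.parts.toFinset, (k : ℚ) * (p.parts.count k) * wM F p.parts := by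
    intro p
    rw [← Finset.sum_mul]
    congr 1
    have hsum : p.parts.sum = ∑ k ∈ p.parts.toFinset, p.parts.count k • k :=
      Finset.sum_multiset_count p.parts
    have hn : (n : ℚ) = ((∑ k ∈ p.parts.toFinset, p.parts.count k • k : ℕ) : ℚ) := by
      rw [← hsum, p.parts_sum]
    rw [hn]
    push_cast [smul_eq_mul]
    refine Finset.sum_congr rfl fun k _ => ?_
    ring
  rw [Finset.sum_congr rfl fun p _ => step1 p]
  rw [Finset.sum_sigma']
  simp only [Finset.mul_sum]
  rw [Finset.sum_sigma']
  refine (Finset.sum_bij' (i := fun x hx => ?_) (j := fun y hy => ?_) ?_ ?_ ?_ ?_ ?_).symm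
  · -- i : from (k, q) to (p, k)
    refine ⟨consPart ?_ x.2, x.1⟩
    exact (Finset.mem_sigma.mp hx).1
  · -- j : from (p, k) to (k, q)
    refine ⟨y.2, erasePart y.1 y.2 ?_⟩
    exact Multiset.mem_toFinset.mp (Finset.mem_sigma.mp hy).2
  · -- hi
    intro a ha
    simp only [Finset.mem_sigma, Finset.mem_univ, true_and]
    exact Multiset.mem_toFinset.mpr (Multiset.mem_cons_self _ _)
  · -- hj
    intro a ha
    have hmem : a.2 ∈ a.1.parts := Multiset.mem_toFinset.mp (Finset.mem_sigma.mp ha).2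
    simp only [Finset.mem_sigma, Finset.mem_univ, and_true]
    refine Finset.mem_Icc.mpr ⟨a.1.parts_pos hmem, ?_⟩
    have h : a.2 + (a.1.parts.erase a.2).sum = n := by
      rw [← Multiset.sum_cons, Multiset.cons_erase hmem, a.1.parts_sum]
    omega
  · -- left_inv
    intro a ha
    obtain ⟨k, q⟩ := a
    simp only [Sigma.mk.inj_iff, heq_eq_eq, true_and]
    ext1
    simp [erasePart, consPart]
  · -- right_inv
    intro a ha
    obtain ⟨p, k⟩ := a
    have hmem : k ∈ p.parts := Multiset.mem_toFinset.mp (Finset.mem_sigma.mp ha).2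
    simp only [Sigma.mk.inj_iff]
    constructor
    · ext1
      simp [consPart, erasePart, Multiset.cons_erase hmem]
    · rfl
  · -- values equal
    intro a ha
    obtain ⟨k, q⟩ := a
    have hk1 : 0 < k := (Finset.mem_Icc.mp (Finset.mem_sigma.mp ha).1).1
    have := key F k q.parts (fun j hj => q.parts_pos hj) hk1
    simpa [consPart] using this.symm

end GirardWaringAux

open GirardWaringAux in
/-- Girard–Waring: if `r 0 = 1` and `n·r(n) = ∑_{k=1}^n F(k)·r(n-k)` for `n ≥ 1`, then
`r(n) = ∑_{λ ⊢ n} F_λ / z_λ` with `F_λ = ∏_k F(k)^{m_k(λ)}`. -/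
theorem girard_waring (r F : ℕ → ℚ) (hr0 : r 0 = 1)
    (hrec : ∀ n : ℕ, 1 ≤ n → (n : ℚ) * r n = ∑ k ∈ Finset.Icc 1 n, F k * r (n - k))
    (n : ℕ) :
    r n = ∑ p : n.Partition,
      (∏ k ∈ p.parts.toFinset, F k ^ p.parts.count k) / (zPart p : ℚ) := by
  have hzw : ∀ m (p : Nat.Partition m),
      (∏ k ∈ p.parts.toFinset, F k ^ p.parts.count k) / (zPart p : ℚ) = wM F p.parts :=
    fun m p => rfl
  induction n using Nat.strong_induction_on with
  | _ n ih =>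
    rcases Nat.eq_zero_or_pos n with rfl | hn
    · rw [hr0, Fintype.sum_unique]
      simp [zPart, wM, zM]
    · have hrec' := hrec n hn
      have hIH : ∀ k ∈ Finset.Icc 1 n, F k * r (n - k)
          = F k * ∑ q : (n - k).Partition, wM F q.parts := by
        intro k hk
        have hk' := Finset.mem_Icc.mp hk
        have : n - k < n := by omega
        rw [ih _ this]
        exact rfl
      rw [Finset.sum_congr rfl hIH, ← S_rec F n] at hrec'
      have hnQ : (n : ℚ) ≠ 0 := by exact_mod_cast hn.ne'
      have := mul_left_cancel₀ hnQ hrec'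
      rw [this]
      exact Finset.sum_congr rfl fun p _ => hzw _ p
end

section
/- For every n ≥ 0, τ(n+1) = ∑_{λ ⊢ n} (-24)^{l(λ)} · (∏_k σ(k)^{m_k(λ)}) / z_λ, where the sum ranges over all partitions λ of n. -/
open PowerSeries Finset

noncomputable section

def sigmaQ (j : ℕ) : ℚ := ((∑ d ∈ j.divisors, d : ℕ) : ℚ)

def G (m : ℕ) : ℚ⟦X⟧ := PowerSeries.mk fun j => if m ∣ j then 1 else 0

lemma one_sub_mul_G {m : ℕ} (hm : 0 < m) : ((1 : ℚ⟦X⟧) - X ^ m) * G m = 1 := by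
  ext k
  rw [sub_mul, one_mul, map_sub, PowerSeries.coeff_X_pow_mul']
  simp only [G, coeff_mk, PowerSeries.coeff_one]
  rcases Nat.eq_zero_or_pos k with rfl | hk
  · have : ¬ m ≤ 0 := by omega
    simp [this]
  · have key : (if m ≤ k then (if m ∣ k - m then (1:ℚ) else 0) else 0)
        = (if m ∣ k then 1 else 0) := by
      by_cases h : m ∣ k
      · have hmk : m ≤ k := Nat.le_of_dvd hk h
        simp [hmk, h, Nat.dvd_sub h dvd_rfl]
      · by_cases h2 : m ≤ k
        · have : ¬ m ∣ k - m := fun hd => h (by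
            have := Nat.sub_add_cancel h2
            exact this ▸ Nat.dvd_add hd dvd_rfl)
          simp [h2, h, this]
        · simp [h2, h]
    rw [key, sub_self, eq_comm, if_neg hk.ne']

lemma derivFun_X_pow (m : ℕ) :
    derivativeFun (X ^ (m + 1) : ℚ⟦X⟧) = ((m : ℚ) + 1) • X ^ m := by
  ext k
  change coeff k (PowerSeries.derivative ℚ (X ^ (m + 1))) = _
  rw [coeff_derivative]
  rw [PowerSeries.coeff_X_pow, PowerSeries.coeff_smul, PowerSeries.coeff_X_pow]
  by_cases h : k = m
  · simp [h]
  · have h2 : ¬ (k + 1 = m + 1) := by omega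
    simp [h, h2]

open scoped PowerSeries in
lemma X_mul_deriv_pow24 {m : ℕ} (hm : 0 < m) :
    X * (d⁄dX ℚ) (((1 : ℚ⟦X⟧) - X ^ m) ^ 24)
      = ((1 : ℚ⟦X⟧) - X ^ m) ^ 24 * (C (R := ℚ) ((-24) * m) * (X ^ m * G m)) := by
  obtain ⟨m', rfl⟩ : ∃ m', m = m' + 1 := ⟨m - 1, by omega⟩
  have hd : (d⁄dX ℚ) (((1 : ℚ⟦X⟧) - X ^ (m' + 1)) ^ 24)
      = 24 • ((1 : ℚ⟦X⟧) - X ^ (m' + 1)) ^ 23 • (d⁄dX ℚ) ((1 : ℚ⟦X⟧) - X ^ (m' + 1)) := by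
    simpa using Derivation.leibniz_pow (d⁄dX ℚ) (a := (1 : ℚ⟦X⟧) - X ^ (m' + 1)) 24
  have hd2 : (d⁄dX ℚ) ((1 : ℚ⟦X⟧) - X ^ (m' + 1)) = -(((m' : ℚ) + 1) • X ^ m') := by
    rw [map_sub]
    show derivativeFun (1 : ℚ⟦X⟧) - derivativeFun (X ^ (m' + 1)) = _
    rw [derivativeFun_one, derivFun_X_pow, zero_sub]
  have hG := one_sub_mul_G (m := m' + 1) (by omega)
  have h24 : ((1 : ℚ⟦X⟧) - X ^ (m' + 1)) ^ 24 * G (m' + 1)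
      = ((1 : ℚ⟦X⟧) - X ^ (m' + 1)) ^ 23 := by
    calc ((1 : ℚ⟦X⟧) - X ^ (m' + 1)) ^ 24 * G (m' + 1)
        = ((1 : ℚ⟦X⟧) - X ^ (m' + 1)) ^ 23 * ((((1 : ℚ⟦X⟧) - X ^ (m' + 1))) * G (m' + 1)) := by
          ring
      _ = _ := by rw [hG, mul_one]
  have hC : (C (R := ℚ)) ((-24 : ℚ) * ((m' : ℚ) + 1)) = (-24 : ℚ⟦X⟧) * (C (R := ℚ) ((m' : ℚ) + 1)) := by
    rw [map_mul, map_neg, map_ofNat]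
  have key : ((1 : ℚ⟦X⟧) - X ^ (m' + 1)) ^ 24
        * (C (R := ℚ) ((-24 : ℚ) * ((m' : ℚ) + 1)) * (X ^ (m' + 1) * G (m' + 1)))
      = C (R := ℚ) ((-24 : ℚ) * ((m' : ℚ) + 1)) * X ^ (m' + 1)
        * ((1 : ℚ⟦X⟧) - X ^ (m' + 1)) ^ 23 := by
    rw [← h24]; ring
  rw [hd, hd2]
  push_cast
  rw [key, hC]
  simp only [nsmul_eq_mul, smul_eq_mul, smul_eq_C_mul]
  push_cast
  ring

open scoped PowerSeries in
lemma X_mul_deriv_prod (s : Finset ℕ) (hs : ∀ m ∈ s, 0 < m) :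
    X * (d⁄dX ℚ) (∏ m ∈ s, ((1 : ℚ⟦X⟧) - X ^ m) ^ 24)
      = (∏ m ∈ s, ((1 : ℚ⟦X⟧) - X ^ m) ^ 24)
        * ∑ m ∈ s, C (R := ℚ) ((-24) * m) * (X ^ m * G m) := by
  classical
  induction s using Finset.induction_on with
  | empty => simp
  | @insert a s ha ih =>
      have hsa : ∀ m ∈ s, 0 < m := fun m hm => hs m (Finset.mem_insert_of_mem hm)
      have h0a : 0 < a := hs a (Finset.mem_insert_self a s)
      rw [Finset.prod_insert ha, Finset.sum_insert ha, Derivation.leibniz]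
      rw [smul_eq_mul, smul_eq_mul, mul_add]
      have e1 : X * (((1 : ℚ⟦X⟧) - X ^ a) ^ 24 * (d⁄dX ℚ) (∏ m ∈ s, ((1 : ℚ⟦X⟧) - X ^ m) ^ 24))
          = ((1 : ℚ⟦X⟧) - X ^ a) ^ 24
            * (X * (d⁄dX ℚ) (∏ m ∈ s, ((1 : ℚ⟦X⟧) - X ^ m) ^ 24)) := by ring
      have e2 : X * ((∏ m ∈ s, ((1 : ℚ⟦X⟧) - X ^ m) ^ 24) * (d⁄dX ℚ) (((1 : ℚ⟦X⟧) - X ^ a) ^ 24))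
          = (∏ m ∈ s, ((1 : ℚ⟦X⟧) - X ^ m) ^ 24)
            * (X * (d⁄dX ℚ) (((1 : ℚ⟦X⟧) - X ^ a) ^ 24)) := by ring
      rw [e1, e2, ih hsa, X_mul_deriv_pow24 h0a]
      ring

lemma coeff_D {N b : ℕ} (hb : b ≤ N) :
    coeff (R := ℚ) b (∑ m ∈ Icc 1 N, C (R := ℚ) ((-24) * m) * (X ^ m * G m)) = -24 * sigmaQ b := by
  rw [map_sum]
  have hterm : ∀ m ∈ Icc 1 N,
      coeff (R := ℚ) b (C (R := ℚ) ((-24) * m) * (X ^ m * G m))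
        = if m ≤ b ∧ m ∣ b - m then (-24) * (m : ℚ) else 0 := by
    intro m hm
    rw [coeff_C_mul, PowerSeries.coeff_X_pow_mul']
    simp only [G, coeff_mk]
    by_cases h1 : m ≤ b
    · by_cases h2 : m ∣ b - m <;> simp [h1, h2]
    · simp [h1]
  rw [Finset.sum_congr rfl hterm, ← Finset.sum_filter]
  have hfil : (Icc 1 N).filter (fun m => m ≤ b ∧ m ∣ b - m) = b.divisors := by
    ext m
    simp only [Finset.mem_filter, Finset.mem_Icc, Nat.mem_divisors]
    constructor
    · rintro ⟨⟨h1, h2⟩, h3, h4⟩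
      have : m ∣ b := by
        have := Nat.sub_add_cancel h3
        exact this ▸ Nat.dvd_add h4 dvd_rfl
      exact ⟨this, by omega⟩
    · rintro ⟨h1, h2⟩
      have hm1 : 1 ≤ m := Nat.pos_of_dvd_of_pos h1 (Nat.pos_of_ne_zero h2)
      have hmb : m ≤ b := Nat.le_of_dvd (Nat.pos_of_ne_zero h2) h1
      exact ⟨⟨hm1, le_trans hmb hb⟩, hmb, Nat.dvd_sub h1 dvd_rfl⟩
  rw [hfil, sigmaQ]
  push_cast
  rw [Finset.mul_sum]

lemma sigmaQ_zero : sigmaQ 0 = 0 := by simp [sigmaQ]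

lemma coeff_F_recurrence (N k : ℕ) (hk : k ≤ N) :
    (k : ℚ) * coeff (R := ℚ) k (∏ m ∈ Icc 1 N, ((1 : ℚ⟦X⟧) - X ^ m) ^ 24)
      = -24 * ∑ i ∈ Icc 1 k,
          sigmaQ i * coeff (R := ℚ) (k - i) (∏ m ∈ Icc 1 N, ((1 : ℚ⟦X⟧) - X ^ m) ^ 24) := by
  classical
  set F : ℚ⟦X⟧ := ∏ m ∈ Icc 1 N, ((1 : ℚ⟦X⟧) - X ^ m) ^ 24 with hF
  have hmain := X_mul_deriv_prod (Icc 1 N) (fun m hm => (Finset.mem_Icc.mp hm).1)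
  rcases Nat.eq_zero_or_pos k with rfl | hk0
  · simp
  obtain ⟨k', rfl⟩ : ∃ k', k = k' + 1 := ⟨k - 1, by omega⟩
  have hL : coeff (R := ℚ) (k' + 1) (X * (PowerSeries.derivative ℚ) F)
      = ((k' : ℚ) + 1) * coeff (R := ℚ) (k' + 1) F := by
    rw [PowerSeries.coeff_succ_X_mul, PowerSeries.coeff_derivative]
    push_cast
    ring
  have hR : coeff (R := ℚ) (k' + 1)
        (F * ∑ m ∈ Icc 1 N, C (R := ℚ) ((-24) * m) * (X ^ m * G m))
      = -24 * ∑ i ∈ Icc 1 (k' + 1), sigmaQ i * coeff (R := ℚ) (k' + 1 - i) F := by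
    rw [PowerSeries.coeff_mul]
    rw [Finset.Nat.sum_antidiagonal_eq_sum_range_succ
      (f := fun a b => coeff (R := ℚ) a F * coeff (R := ℚ) b (∑ m ∈ Icc 1 N, C (R := ℚ) ((-24) * m) * (X ^ m * G m)))]
    rw [← Finset.sum_range_reflect]
    simp only [Nat.succ_sub_one]
    have hterm : ∀ i ∈ Finset.range (k' + 1 + 1),
        coeff (R := ℚ) (k' + 1 - i) F
            * coeff (R := ℚ) (k' + 1 - (k' + 1 - i)) (∑ m ∈ Icc 1 N, C (R := ℚ) ((-24) * m) * (X ^ m * G m))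
          = -24 * (sigmaQ i * coeff (R := ℚ) (k' + 1 - i) F) := by
      intro i hi
      have hi' : i ≤ k' + 1 := by simpa using Nat.lt_succ_iff.mp (Finset.mem_range.mp hi)
      have : k' + 1 - (k' + 1 - i) = i := by omega
      rw [this, coeff_D (le_trans hi' hk)]
      ring
    rw [Finset.sum_congr rfl hterm]
    have hins : Finset.range (k' + 1 + 1) = insert 0 (Icc 1 (k' + 1)) := by
      ext i; simp [Finset.mem_range, Finset.mem_Icc]; omega
    rw [hins, Finset.sum_insert (by simp), sigmaQ_zero]
    rw [Finset.mul_sum]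
    simp
  have := hmain
  rw [← hF] at this
  push_cast
  calc ((k' : ℚ) + 1) * coeff (R := ℚ) (k' + 1) F
      = coeff (R := ℚ) (k' + 1) (X * (PowerSeries.derivative ℚ) F) := hL.symm
    _ = coeff (R := ℚ) (k' + 1) (F * ∑ m ∈ Icc 1 N, C (R := ℚ) ((-24) * m) * (X ^ m * G m)) := by rw [this]
    _ = _ := hR

lemma coeff_F_zero (N : ℕ) :
    coeff (R := ℚ) 0 (∏ m ∈ Icc 1 N, ((1 : ℚ⟦X⟧) - X ^ m) ^ 24) = 1 := by
  rw [PowerSeries.coeff_zero_eq_constantCoeff, map_prod]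
  apply Finset.prod_eq_one
  intro m hm
  have hm1 : m ≠ 0 := by have := (Finset.mem_Icc.mp hm).1; omega
  rw [map_pow, map_sub, map_one, map_pow, constantCoeff_X, zero_pow hm1, sub_zero, one_pow]

/-! ### Partition side -/

def Zm (s : Multiset ℕ) : ℕ := ∏ k ∈ s.toFinset, k ^ s.count k * (s.count k).factorial

def Wm (s : Multiset ℕ) : ℚ :=
  ((-24 : ℚ) ^ (Multiset.card s) * ∏ k ∈ s.toFinset, sigmaQ k ^ s.count k) / (Zm s : ℚ)

lemma Zm_ne_zero {s : Multiset ℕ} (hs : ∀ i ∈ s, 0 < i) : (Zm s : ℚ) ≠ 0 := by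
  have : 0 < Zm s := by
    apply Finset.prod_pos
    intro k hk
    have hk0 : 0 < k := hs k (Multiset.mem_toFinset.mp hk)
    positivity
  exact_mod_cast this.ne'

lemma prod_count_cons {M : Type*} [CommMonoid M] (f : ℕ → ℕ → M) (j : ℕ) (s : Multiset ℕ)
    (hf0 : f j 0 = 1) :
    (∏ k ∈ (j ::ₘ s).toFinset, f k ((j ::ₘ s).count k)) * f j (s.count j)
      = f j (s.count j + 1) * ∏ k ∈ s.toFinset, f k (s.count k) := by
  classical
  have hcount : ∀ k, (j ::ₘ s).count k = if k = j then s.count j + 1 else s.count k := by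
    intro k
    rw [Multiset.count_cons]
    by_cases h : k = j <;> simp [h]
  by_cases hj : j ∈ s.toFinset
  · have htf : (j ::ₘ s).toFinset = s.toFinset := by
      rw [Multiset.toFinset_cons, Finset.insert_eq_self.mpr hj]
    rw [htf]
    rw [← Finset.mul_prod_erase _ _ hj, ← Finset.mul_prod_erase _ (fun k => f k (s.count k)) hj]
    have : ∀ k ∈ s.toFinset.erase j, f k ((j ::ₘ s).count k) = f k (s.count k) := by
      intro k hk
      rw [hcount k, if_neg (Finset.ne_of_mem_erase hk)]
    rw [Finset.prod_congr rfl this, hcount j, if_pos rfl]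
    rw [mul_right_comm, mul_assoc]
  · have hc0 : s.count j = 0 :=
      Multiset.count_eq_zero.mpr (fun h => hj (Multiset.mem_toFinset.mpr h))
    have htf : (j ::ₘ s).toFinset = insert j s.toFinset := Multiset.toFinset_cons j s
    rw [htf, Finset.prod_insert hj, hcount j, if_pos rfl, hc0, hf0, mul_one]
    congr 1
    apply Finset.prod_congr rfl
    intro k hk
    rw [hcount k, if_neg]
    exact fun h => hj (h ▸ hk)

lemma sigmaQ_ne_zero {j : ℕ} (hj : 0 < j) : sigmaQ j ≠ 0 := by
  have hmem : j ∈ j.divisors := Nat.mem_divisors_self j hj.ne'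
  have : 0 < ∑ d ∈ j.divisors, d :=
    lt_of_lt_of_le hj (Finset.single_le_sum (f := fun d => d) (fun _ _ => Nat.zero_le _) hmem)
  simp only [sigmaQ]
  exact_mod_cast this.ne'

lemma Zm_cast (t : Multiset ℕ) :
    (Zm t : ℚ) = ∏ k ∈ t.toFinset, (k : ℚ) ^ t.count k * ((t.count k).factorial : ℚ) := by
  rw [Zm]
  push_cast
  rfl

lemma Wm_cons {j : ℕ} (hj : 0 < j) {s : Multiset ℕ} (hs : ∀ i ∈ s, 0 < i) :
    ((j : ℚ) * (((j ::ₘ s).count j : ℕ) : ℚ)) * Wm (j ::ₘ s) = -24 * sigmaQ j * Wm s := by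
  classical
  set c := s.count j with hc
  have hcount : (j ::ₘ s).count j = c + 1 := by rw [Multiset.count_cons_self]
  have hcard : Multiset.card (j ::ₘ s) = Multiset.card s + 1 := by simp
  -- sigma product relation
  have hP : (∏ k ∈ (j ::ₘ s).toFinset, sigmaQ k ^ ((j ::ₘ s).count k)) * sigmaQ j ^ c
      = sigmaQ j ^ (c + 1) * ∏ k ∈ s.toFinset, sigmaQ k ^ s.count k :=
    prod_count_cons (fun k m => sigmaQ k ^ m) j s (pow_zero _)
  have hPc : (∏ k ∈ (j ::ₘ s).toFinset, sigmaQ k ^ ((j ::ₘ s).count k))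
      = sigmaQ j * ∏ k ∈ s.toFinset, sigmaQ k ^ s.count k := by
    have hne : sigmaQ j ^ c ≠ 0 := pow_ne_zero _ (sigmaQ_ne_zero hj)
    apply mul_right_cancel₀ hne
    rw [hP, pow_succ]
    ring
  -- Z relation
  have hZ : (∏ k ∈ (j ::ₘ s).toFinset, (k : ℚ) ^ ((j ::ₘ s).count k)
        * (Nat.factorial ((j ::ₘ s).count k) : ℚ)) * ((j : ℚ) ^ c * (Nat.factorial c : ℚ))
      = ((j : ℚ) ^ (c + 1) * (Nat.factorial (c + 1) : ℚ))
        * ∏ k ∈ s.toFinset, (k : ℚ) ^ s.count k * (Nat.factorial (s.count k) : ℚ) :=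
    prod_count_cons (fun k m => (k : ℚ) ^ m * (Nat.factorial m : ℚ)) j s (by simp)
  have hfne : (j : ℚ) ^ c * (Nat.factorial c : ℚ) ≠ 0 := by
    have h1 : (j : ℚ) ≠ 0 := Nat.cast_ne_zero.mpr hj.ne'
    have h2 : (Nat.factorial c : ℚ) ≠ 0 := Nat.cast_ne_zero.mpr (Nat.factorial_ne_zero c)
    positivity
  have hZc : (Zm (j ::ₘ s) : ℚ) = (j : ℚ) * ((c : ℚ) + 1) * (Zm s : ℚ) := by
    rw [Zm_cast, Zm_cast]
    apply mul_right_cancel₀ hfne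
    rw [hZ]
    rw [Nat.factorial_succ]
    push_cast
    ring
  have hZs := Zm_ne_zero hs
  have hZcs : (Zm (j ::ₘ s) : ℚ) ≠ 0 := by
    rw [hZc]
    have h1 : (j : ℚ) ≠ 0 := Nat.cast_ne_zero.mpr hj.ne'
    have h2 : ((c : ℚ) + 1) ≠ 0 := by positivity
    exact mul_ne_zero (mul_ne_zero h1 h2) hZs
  rw [Wm, Wm, hcount, hcard, hPc, hZc]
  field_simp
  push_cast
  ring

def S (n : ℕ) : ℚ := ∑ p : n.Partition, Wm p.parts

lemma S_zero : S 0 = 1 := by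
  have : ∀ p : Nat.Partition 0, Wm p.parts = 1 := by
    intro p
    rw [Nat.Partition.partition_zero_parts p]
    simp [Wm, Zm]
  rw [S, Finset.sum_congr rfl (fun p _ => this p), Finset.sum_const, nsmul_eq_mul, mul_one]
  have : Fintype.card (Nat.Partition 0) = 1 := by
    rw [Fintype.card_eq_one_iff]
    exact ⟨⟨0, by simp, rfl⟩, fun p => Nat.Partition.ext (Nat.Partition.partition_zero_parts p)⟩
  simp [Finset.card_univ, this]

def consPart {n : ℕ} (j : ℕ) (hj : j ∈ Icc 1 n) (q : (n - j).Partition) : n.Partition where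
  parts := j ::ₘ q.parts
  parts_pos := by
    intro i hi
    rcases Multiset.mem_cons.mp hi with rfl | h
    · exact (Finset.mem_Icc.mp hj).1
    · exact q.parts_pos h
  parts_sum := by
    rw [Multiset.sum_cons, q.parts_sum]
    have := (Finset.mem_Icc.mp hj).2
    omega

def erasePart {n : ℕ} (p : n.Partition) (k : ℕ) (hk : k ∈ p.parts) : (n - k).Partition where
  parts := p.parts.erase k
  parts_pos := fun hi => p.parts_pos (Multiset.mem_of_mem_erase hi)
  parts_sum := by
    have h1 : k ::ₘ p.parts.erase k = p.parts := Multiset.cons_erase hk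
    have h2 : k + (p.parts.erase k).sum = n := by
      have := congrArg Multiset.sum h1
      rw [Multiset.sum_cons] at this
      rw [this, p.parts_sum]
    omega

lemma S_recurrence (n : ℕ) :
    (n : ℚ) * S n = -24 * ∑ j ∈ Icc 1 n, sigmaQ j * S (n - j) := by
  classical
  have hL : (n : ℚ) * S n
      = ∑ x ∈ (Finset.univ : Finset n.Partition).sigma (fun p => p.parts.toFinset),
          ((x.2 : ℚ) * ((x.1.parts.count x.2 : ℕ) : ℚ)) * Wm x.1.parts := by
    rw [Finset.sum_sigma]
    rw [S, Finset.mul_sum]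
    apply Finset.sum_congr rfl
    intro p _
    have hsum : p.parts.sum = ∑ k ∈ p.parts.toFinset, p.parts.count k • k :=
      Finset.sum_multiset_count p.parts
    have key : ((p.parts.sum : ℕ) : ℚ) * Wm p.parts
        = ∑ k ∈ p.parts.toFinset, ((k : ℚ) * ((p.parts.count k : ℕ) : ℚ)) * Wm p.parts := by
      rw [hsum]
      push_cast [smul_eq_mul]
      rw [Finset.sum_mul]
      apply Finset.sum_congr rfl
      intro k _
      ring
    rw [p.parts_sum] at key
    exact key
  have hR : -24 * ∑ j ∈ Icc 1 n, sigmaQ j * S (n - j)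
      = ∑ x ∈ (Icc 1 n).sigma (fun j => (Finset.univ : Finset (n - j).Partition)),
          -24 * sigmaQ x.1 * Wm x.2.parts := by
    rw [Finset.sum_sigma]
    rw [Finset.mul_sum]
    apply Finset.sum_congr rfl
    intro j _
    rw [S, ← mul_assoc, Finset.mul_sum]
  rw [hL, hR]
  refine Finset.sum_bij'
    (fun x hx => ⟨x.2, erasePart x.1 x.2 (Multiset.mem_toFinset.mp (Finset.mem_sigma.mp hx).2)⟩)
    (fun x hx => ⟨consPart x.1 (Finset.mem_sigma.mp hx).1 x.2, x.1⟩)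
    ?_ ?_ ?_ ?_ ?_
  · rintro ⟨p, k⟩ hx
    have hk : k ∈ p.parts := Multiset.mem_toFinset.mp (Finset.mem_sigma.mp hx).2
    dsimp only
    rw [Finset.mem_sigma]
    refine ⟨?_, Finset.mem_univ _⟩
    rw [Finset.mem_Icc]
    refine ⟨p.parts_pos hk, ?_⟩
    have h1 : k ≤ p.parts.sum := Multiset.single_le_sum (fun y _ => Nat.zero_le y) _ hk
    exact le_trans h1 (le_of_eq p.parts_sum)
  · rintro ⟨j, q⟩ hx
    dsimp only
    rw [Finset.mem_sigma]
    refine ⟨Finset.mem_univ _, ?_⟩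
    rw [Multiset.mem_toFinset]
    exact Multiset.mem_cons_self _ _
  · rintro ⟨p, k⟩ hx
    have hk : k ∈ p.parts := Multiset.mem_toFinset.mp (Finset.mem_sigma.mp hx).2
    apply Sigma.ext
    · apply Nat.Partition.ext
      show k ::ₘ p.parts.erase k = p.parts
      exact Multiset.cons_erase hk
    · exact HEq.rfl
  · rintro ⟨j, q⟩ hx
    apply Sigma.ext
    · rfl
    · apply heq_of_eq
      apply Nat.Partition.ext
      show (j ::ₘ q.parts).erase j = q.parts
      exact Multiset.erase_cons_head j q.parts
  · rintro ⟨p, k⟩ hx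
    have hk : k ∈ p.parts := Multiset.mem_toFinset.mp (Finset.mem_sigma.mp hx).2
    have hpos : ∀ i ∈ p.parts.erase k, 0 < i :=
      fun i hi => p.parts_pos (Multiset.mem_of_mem_erase hi)
    have hkpos : 0 < k := p.parts_pos hk
    have hmain := Wm_cons hkpos hpos
    rw [Multiset.cons_erase hk] at hmain
    exact hmain

lemma coeff_eq_S (N : ℕ) : ∀ k, k ≤ N →
    coeff (R := ℚ) k (∏ m ∈ Icc 1 N, ((1 : ℚ⟦X⟧) - X ^ m) ^ 24) = S k := by
  intro k
  induction k using Nat.strong_induction_on with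
  | _ k ih =>
    intro hk
    rcases Nat.eq_zero_or_pos k with rfl | hk0
    · rw [S_zero]
      exact coeff_F_zero N
    · have h1 := coeff_F_recurrence N k hk
      have h2 := S_recurrence k
      have h3 : ∀ i ∈ Icc 1 k,
          sigmaQ i * coeff (R := ℚ) (k - i) (∏ m ∈ Icc 1 N, ((1 : ℚ⟦X⟧) - X ^ m) ^ 24)
            = sigmaQ i * S (k - i) := by
        intro i hi
        have hi' := Finset.mem_Icc.mp hi
        rw [ih (k - i) (by omega) (by omega)]
      rw [Finset.sum_congr rfl h3] at h1
      have : (k : ℚ) * coeff (R := ℚ) k (∏ m ∈ Icc 1 N, ((1 : ℚ⟦X⟧) - X ^ m) ^ 24)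
          = (k : ℚ) * S k := by rw [h1, h2]
      have hkQ : (k : ℚ) ≠ 0 := Nat.cast_ne_zero.mpr hk0.ne'
      exact mul_left_cancel₀ hkQ this

end

/-- Theorem 3.1: with `tau` Ramanujan's τ-function (coefficients of
`q·∏_{m≥1}(1-q^m)^{24}`, characterized via truncated products), for every `n ≥ 0`,
`τ(n+1) = ∑_{λ ⊢ n} (-24)^{l(λ)}·(∏_k σ(k)^{m_k(λ)}) / z_λ`. -/
theorem tau_partition_sum
    (tau : ℕ → ℤ)
    (htau : ∀ N : ℕ,
      (PowerSeries.coeff (R := ℤ) N)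
        (PowerSeries.X * ∏ m ∈ Finset.Icc 1 N, (1 - PowerSeries.X ^ m) ^ 24) = tau N)
    (n : ℕ) :
    (tau (n + 1) : ℚ) = ∑ p : n.Partition,
      ((-24 : ℚ) ^ (Multiset.card p.parts)
          * ∏ k ∈ p.parts.toFinset, ((∑ d ∈ k.divisors, d : ℕ) : ℚ) ^ p.parts.count k)
        / (zPart p : ℚ) := by
  have h := htau (n + 1)
  have hQ : (tau (n + 1) : ℚ)
      = coeff (R := ℚ) (n + 1) (PowerSeries.map (Int.castRingHom ℚ)
          (X * ∏ m ∈ Finset.Icc 1 (n + 1), (1 - X ^ m) ^ 24)) := by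
    rw [PowerSeries.coeff_map, h]
    rfl
  have hmap : PowerSeries.map (Int.castRingHom ℚ)
        (X * ∏ m ∈ Finset.Icc 1 (n + 1), (1 - X ^ m) ^ 24)
      = X * ∏ m ∈ Finset.Icc 1 (n + 1), ((1 : ℚ⟦X⟧) - X ^ m) ^ 24 := by
    rw [map_mul, map_prod]
    simp [map_pow, map_sub, PowerSeries.map_X]
  rw [hQ, hmap, PowerSeries.coeff_succ_X_mul, coeff_eq_S (n + 1) n (by omega)]
  rw [S]
  apply Finset.sum_congr rfl
  intro p _
  rfl
end

section
/- For every partition λ of n, the sum over all partitions of n of the reciprocals 1/z_λ equals 1: ∑_{λ ⊢ n} 1/z_λ = 1. -/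
/-!
Double counting. Since `n = ∑_k k·m_k(λ)` for every `λ ⊢ n`, we get
`n · ∑_λ 1/z_λ = ∑_{k=1}^n ∑_{λ ∋ k} k·m_k(λ)/z_λ`. Removing one part `k` from `λ` divides
`z_λ` by exactly `k·m_k(λ)`, and it is a bijection from the partitions of `n` having a part `k`
onto the partitions of `n - k`; so by strong induction every inner sum is `1` and the total is `n`.
-/

open Finset

namespace Multiset

def zProd (s : Multiset ℕ) : ℕ :=
  ∏ k ∈ s.toFinset, k ^ s.count k * (s.count k).factorial

theorem zProd_eq_prod_of_subset {s : Multiset ℕ} {t : Finset ℕ} (h : s.toFinset ⊆ t) :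
    zProd s = ∏ k ∈ t, k ^ s.count k * (s.count k).factorial :=
  prod_subset h fun k _ hk => by simp [count_eq_zero.2 (by simpa using hk)]

theorem zProd_cons (k : ℕ) (s : Multiset ℕ) :
    zProd (k ::ₘ s) = k * (s.count k + 1) * zProd s := by
  have hk : k ∈ insert k s.toFinset := mem_insert_self k _
  have hrest : ∏ j ∈ (insert k s.toFinset).erase k,
        j ^ (k ::ₘ s).count j * ((k ::ₘ s).count j).factorial =
      ∏ j ∈ (insert k s.toFinset).erase k, j ^ s.count j * (s.count j).factorial :=
    prod_congr rfl fun j hj => by rw [count_cons_of_ne (ne_of_mem_erase hj)]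
  rw [zProd_eq_prod_of_subset (toFinset_cons k s).le,
    zProd_eq_prod_of_subset (subset_insert k s.toFinset), ← mul_prod_erase _ _ hk,
    ← mul_prod_erase _ _ hk, hrest, count_cons_self, pow_succ, Nat.factorial_succ]
  ring

theorem zProd_of_mem {k : ℕ} {s : Multiset ℕ} (hk : k ∈ s) :
    zProd s = k * s.count k * zProd (s.erase k) := by
  conv_lhs => rw [← cons_erase hk]
  rw [zProd_cons, count_erase_self, Nat.sub_add_cancel (count_pos.2 hk)]

theorem inv_zProd_erase {K : Type*} [Field K] [CharZero K] {k : ℕ} {s : Multiset ℕ}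
    (hk : k ∈ s) (hk0 : k ≠ 0) :
    (zProd (s.erase k) : K)⁻¹ = k * s.count k / zProd s := by
  rw [zProd_of_mem hk, Nat.cast_mul, Nat.cast_mul, div_mul_cancel_left₀]
  exact_mod_cast Nat.mul_ne_zero hk0 (count_ne_zero.2 hk)

end Multiset

namespace Nat.Partition

theorem sum_mul_count_parts {n : ℕ} (p : n.Partition) :
    ∑ k ∈ p.parts.toFinset, k * p.parts.count k = n := by
  simp_rw [mul_comm _ (p.parts.count _)]
  exact (sum_multiset_count p.parts).symm.trans p.parts_sum

theorem sum_filter_mem_parts {M : Type*} [AddCommMonoid M] {n k : ℕ} (hk : 1 ≤ k) (hkn : k ≤ n)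
    (f : Multiset ℕ → M) :
    ∑ p : n.Partition with k ∈ p.parts, f (p.parts.erase k) =
      ∑ q : (n - k).Partition, f q.parts := by
  rw [sum_subtype _ (p := fun p : n.Partition => k ∈ p.parts) fun p => by simp]
  exact Fintype.sum_equiv (partitionWithPartEquiv hk hkn) _ _ fun p => by simp

theorem sum_inv_zProd_parts (n : ℕ) : ∑ p : n.Partition, (p.parts.zProd : ℚ)⁻¹ = 1 := by
  induction n using Nat.strong_induction_on with
  | _ n ih =>
  rcases n.eq_zero_or_pos with rfl | hn
  · simp [Multiset.zProd]
  refine mul_left_cancel₀ (Nat.cast_ne_zero.2 hn.ne') ?_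
  calc (n : ℚ) * ∑ p : n.Partition, (p.parts.zProd : ℚ)⁻¹
      = ∑ p : n.Partition, ∑ k ∈ p.parts.toFinset, (k * p.parts.count k : ℚ) / p.parts.zProd := by
        refine (mul_sum _ _ _).trans (sum_congr rfl fun p _ => ?_)
        rw [← sum_div, ← div_eq_mul_inv]
        congr 1
        exact_mod_cast p.sum_mul_count_parts.symm
    _ = ∑ k ∈ Icc 1 n, ∑ p : n.Partition with k ∈ p.parts,
          (k * p.parts.count k : ℚ) / p.parts.zProd := by
        refine sum_comm' fun p k => ?_
        simp only [mem_univ, true_and, Multiset.mem_toFinset, mem_filter, mem_Icc]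
        exact ⟨fun hk => ⟨hk, p.parts_pos hk, le_of_mem_parts hk⟩, fun h => h.1⟩
    _ = ∑ k ∈ Icc 1 n, ∑ p : n.Partition with k ∈ p.parts, ((p.parts.erase k).zProd : ℚ)⁻¹ := by
        refine sum_congr rfl fun k _ => sum_congr rfl fun p hp => ?_
        have hk : k ∈ p.parts := (mem_filter.1 hp).2
        exact (Multiset.inv_zProd_erase hk (p.parts_pos hk).ne').symm
    _ = ∑ k ∈ Icc 1 n, (1 : ℚ) := sum_congr rfl fun k hk => by
        rw [mem_Icc] at hk
        rw [sum_filter_mem_parts hk.1 hk.2 fun s => (s.zProd : ℚ)⁻¹]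
        exact ih _ (by omega)
    _ = n * 1 := by simp

end Nat.Partition

theorem sum_inv_zPart_general (n : ℕ) :
    ∑ p : n.Partition, (1 : ℚ) / (zPart p : ℚ) = 1 := by
  simp only [one_div]
  exact Nat.Partition.sum_inv_zProd_parts n

/-- Sylvester: for a positive integer `n`, `∑_{λ ⊢ n} 1/z_λ = 1`. -/
theorem sum_inv_zPart (n : ℕ) (hn : 1 ≤ n) :
    ∑ p : n.Partition, (1 : ℚ) / (zPart p : ℚ) = 1 :=
  sum_inv_zPart_general n
end

section
/- Let h_n and p_n satisfy n·h_n = ∑_{r=1}^{n} p_r·h_{n-r} with h_0 = 1. Then n!·h_n equals the determinant of the n×n matrix with entries p_1, -1, 0,...,0 in the first row; p_2, p_1, -2, 0,...,0 in the second row; and generally row i having entries p_i, p_{i-1}, ..., p_1 followed by zeros, except that the superdiagonal entry in row i is -i (for i < n); the last row is p_n, p_{n-1}, ..., p_1. -/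
/-!
With `x = (h₀, …, h_{n-1})`, row `i` of `M x` is `i·hᵢ` by the recursion, minus the
superdiagonal term `i·hᵢ` (absent in the last row); so `M x = n·hₙ·eₙ`. Cramer's rule for the
first coordinate gives `det M · h₀ = det M'`, where `M'` is `M` with first column replaced by
`n·hₙ·eₙ`. Expanding along that column leaves a lower triangular matrix with diagonal
`-1, …, -(n-1)`; the two signs `(-1)^(n-1)` cancel, and `det M' = n·hₙ·(n-1)!`.
-/

open Finset Matrix

namespace Matrix

variable {R : Type*} [CommRing R]

theorem cramer_mulVec {n : Type*} [Fintype n] [DecidableEq n] (A : Matrix n n R) (x : n → R) :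
    A.cramer (A *ᵥ x) = A.det • x := by
  rw [cramer_eq_adjugate_mulVec, mulVec_mulVec, adjugate_mul, smul_mulVec, one_mulVec]

theorem det_updateCol_zero_single_last {m : ℕ} (A : Matrix (Fin (m + 1)) (Fin (m + 1)) R)
    (c : R) :
    (A.updateCol 0 (Pi.single (Fin.last m) c)).det =
      (-1) ^ m * c * (A.submatrix Fin.castSucc Fin.succ).det := by
  rw [det_succ_column _ 0, sum_eq_single (Fin.last m)]
  · rw [submatrix_updateCol_succAbove]
    simp only [updateCol_self, Pi.single_eq_same, Fin.succAbove_zero, Fin.succAbove_last,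
      Fin.val_last, Fin.val_zero, add_zero]
  · intro i _ hi
    simp [Pi.single_eq_of_ne hi]
  · simp

end Matrix

section Brioschi

variable {R : Type*} [CommRing R]

def SatisfiesNewtonRecursion (p h : ℕ → R) : Prop :=
  ∀ n : ℕ, 1 ≤ n → (n : R) * h n = ∑ r ∈ Icc 1 n, p r * h (n - r)

theorem SatisfiesNewtonRecursion.sum_range_eq {p h : ℕ → R}
    (hrec : SatisfiesNewtonRecursion p h) (k : ℕ) :
    ∑ j ∈ range (k + 1), p (k - j + 1) * h j = (k + 1) * h (k + 1) := by
  rw [← Nat.cast_add_one, hrec (k + 1) (Nat.le_add_left 1 k), ← Ico_add_one_right_eq_Icc,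
    sum_Ico_eq_sum_range, ← sum_range_reflect]
  push_cast
  refine sum_congr rfl fun j hj => ?_
  have := mem_range.1 hj
  congr 2 <;> omega

def brioschiMatrix (p : ℕ → R) (n : ℕ) : Matrix (Fin n) (Fin n) R :=
  Matrix.of fun i j =>
    if (j : ℕ) ≤ (i : ℕ) then p ((i : ℕ) - (j : ℕ) + 1)
    else if (j : ℕ) = (i : ℕ) + 1 then -((i : ℕ) + 1 : R)
    else 0

theorem brioschiMatrix_mulVec {p h : ℕ → R} (hrec : SatisfiesNewtonRecursion p h) (m : ℕ) :
    brioschiMatrix p (m + 1) *ᵥ (fun j => h j) =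
      Pi.single (Fin.last m) ((m + 1) * h (m + 1)) := by
  ext i
  have hsplit : ∀ j : ℕ, (if j ≤ i then p (i - j + 1) else
      if j = i + 1 then -((i : ℕ) + 1 : R) else 0) * h j =
        (if j < i + 1 then p (i - j + 1) * h j else 0) +
          if i + 1 = j then -((i : ℕ) + 1 : R) * h j else 0 := by
    intro j
    split_ifs <;> first | omega | simp
  have hfilter : (range (m + 1)).filter (· < (i : ℕ) + 1) = range (i + 1) := by
    ext j
    simp only [mem_filter, mem_range]
    omega
  simp only [mulVec, dotProduct, brioschiMatrix, of_apply]
  rw [Fin.sum_univ_eq_sum_range (fun j => (if j ≤ i then p (i - j + 1) else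
      if j = i + 1 then -((i : ℕ) + 1 : R) else 0) * h j),
    sum_congr rfl fun j _ => hsplit j, sum_add_distrib, ← sum_filter, hfilter,
    hrec.sum_range_eq, sum_ite_eq]
  rcases eq_or_ne i (Fin.last m) with rfl | hne
  · simp
  · rw [if_pos (by simpa using Fin.val_lt_last hne), Pi.single_eq_of_ne hne]
    ring

theorem brioschiMatrix_submatrix_castSucc_succ_apply (p : ℕ → R) {m : ℕ} (i j : Fin m) :
    (brioschiMatrix p (m + 1)).submatrix Fin.castSucc Fin.succ i j =
      if (j : ℕ) < i then p (i - j) else if j = i then -((i : ℕ) + 1 : R) else 0 := by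
  simp only [submatrix_apply, brioschiMatrix, of_apply, Fin.val_castSucc, Fin.val_succ,
    Nat.add_right_cancel_iff, Fin.val_inj]
  by_cases hji : (j : ℕ) < i
  · rw [if_pos hji, if_pos (Nat.succ_le_of_lt hji), Nat.sub_add_eq,
      Nat.sub_add_cancel (Nat.sub_pos_of_lt hji)]
  · rw [if_neg (by omega), if_neg hji]

theorem det_brioschiMatrix_submatrix_castSucc_succ (p : ℕ → R) (m : ℕ) :
    ((brioschiMatrix p (m + 1)).submatrix Fin.castSucc Fin.succ).det =
      (-1) ^ m * m.factorial := by
  have hlower :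
      ((brioschiMatrix p (m + 1)).submatrix Fin.castSucc Fin.succ).IsLowerTriangular := by
    intro i j (hij : i < j)
    rw [brioschiMatrix_submatrix_castSucc_succ_apply, if_neg (by omega), if_neg hij.ne']
  rw [det_of_isLowerTriangular _ hlower]
  simp only [brioschiMatrix_submatrix_castSucc_succ_apply, lt_irrefl, if_false, if_true]
  rw [Fin.prod_univ_eq_prod_range (fun i => -((i : R) + 1)) m, prod_neg, card_range,
    ← prod_range_add_one_eq_factorial]
  push_cast
  rfl

theorem det_brioschiMatrix_mul_head {p h : ℕ → R} (hrec : SatisfiesNewtonRecursion p h) :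
    ∀ n : ℕ, (brioschiMatrix p n).det * h 0 = n.factorial * h n
  | 0 => by simp
  | m + 1 => by
    have hsign : (-1 : R) ^ m * (-1) ^ m = 1 := by
      rw [← mul_pow, neg_one_mul, neg_neg, one_pow]
    calc (brioschiMatrix p (m + 1)).det * h 0
        = ((brioschiMatrix p (m + 1)).det • fun j : Fin (m + 1) => h j) 0 := rfl
      _ = (brioschiMatrix p (m + 1)).cramer (brioschiMatrix p (m + 1) *ᵥ fun j => h j) 0 := by
        rw [cramer_mulVec]
      _ = (-1) ^ m * ((m + 1) * h (m + 1)) * ((-1) ^ m * m.factorial) := by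
        rw [brioschiMatrix_mulVec hrec, cramer_apply, det_updateCol_zero_single_last,
          det_brioschiMatrix_submatrix_castSucc_succ]
      _ = (m + 1).factorial * h (m + 1) := by
        push_cast [Nat.factorial_succ]
        linear_combination (m + 1) * h (m + 1) * m.factorial * hsign

end Brioschi

/-- Brioschi's determinant solution of the Newton-type recursion: if `h 0 = 1` and
`n·h(n) = ∑_{r=1}^n p(r)·h(n-r)` for all `n ≥ 1`, then `n!·h(n)` is the determinant of the
`n×n` matrix with (1-indexed) entries `M_{i,j} = p_{i-j+1}` for `j ≤ i`, `M_{i,i+1} = -i`,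
and `0` otherwise. -/
theorem brioschi_determinant (h p : ℕ → ℚ) (h0 : h 0 = 1)
    (hrec : ∀ n : ℕ, 1 ≤ n → (n : ℚ) * h n = ∑ r ∈ Finset.Icc 1 n, p r * h (n - r))
    (n : ℕ) :
    (n.factorial : ℚ) * h n =
      Matrix.det (Matrix.of fun i j : Fin n =>
        if (j : ℕ) ≤ (i : ℕ) then p ((i : ℕ) - (j : ℕ) + 1)
        else if (j : ℕ) = (i : ℕ) + 1 then -((i : ℕ) + 1 : ℚ)
        else 0) := by
  rw [← det_brioschiMatrix_mul_head hrec n, h0, mul_one]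
  rfl
end

section
/- τ(n+1) = ((-1)^n / n!) · det M, where M is the n×n matrix with M_{i,j} = 24·σ(i-j+1) for j ≤ i, M_{i,i+1} = i, and M_{i,j} = 0 for j > i+1. -/
open PowerSeries Finset Matrix

namespace TauDeterminantAux

noncomputable def Sgeo (m : ℕ) : PowerSeries ℤ :=
  PowerSeries.mk fun j => if m ∣ j then 1 else 0

lemma one_sub_pow_mul_Sgeo {m : ℕ} (hm : 0 < m) :
    ((1 : ℤ⟦X⟧) - X ^ m) * Sgeo m = 1 := by
  ext j
  rw [sub_mul, one_mul, map_sub, coeff_X_pow_mul']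
  rcases Nat.eq_zero_or_pos j with rfl | hj
  · simp [Sgeo, hm.ne']
  · rw [PowerSeries.coeff_one, if_neg hj.ne']
    simp only [Sgeo, coeff_mk]
    by_cases hmj : m ≤ j
    · rw [if_pos hmj]
      have : m ∣ j ↔ m ∣ j - m := by
        constructor
        · intro h; exact (Nat.dvd_sub h dvd_rfl)
        · intro h; have := Nat.dvd_add h (dvd_refl m); rwa [Nat.sub_add_cancel hmj] at this
      by_cases hd : m ∣ j
      · rw [if_pos hd, if_pos (this.mp hd)]; ring
      · rw [if_neg hd, if_neg (fun hh => hd (this.mpr hh))]; ring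
    · rw [if_neg hmj, if_neg (fun hd => hmj (Nat.le_of_dvd hj hd))]
      ring

lemma exists_one_sub (y : ℤ⟦X⟧) (k : ℕ) : ∃ g, (1 - y) ^ k = 1 - y * g := by
  induction k with
  | zero => exact ⟨0, by simp⟩
  | succ k ih =>
    obtain ⟨g, hg⟩ := ih
    exact ⟨1 + g - y * g, by rw [pow_succ, hg]; ring⟩

lemma coeff_mul_drop {f : ℤ⟦X⟧} {i m : ℕ} (h : i < m) :
    (PowerSeries.coeff (R := ℤ) i) (f * (1 - X ^ m) ^ 24) = PowerSeries.coeff (R := ℤ) i f := by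
  obtain ⟨g, hg⟩ := exists_one_sub (X ^ m : ℤ⟦X⟧) 24
  rw [hg, mul_sub, mul_one, map_sub]
  have h2 : f * (X ^ m * g) = X ^ m * (f * g) := by ring
  rw [h2, coeff_X_pow_mul', if_neg (by omega)]
  ring

lemma coeff_prod_stable (i : ℕ) : ∀ N, i ≤ N →
    (PowerSeries.coeff (R := ℤ) i) (∏ m ∈ Icc 1 N, (1 - X ^ m : ℤ⟦X⟧) ^ 24)
      = (PowerSeries.coeff (R := ℤ) i) (∏ m ∈ Icc 1 i, (1 - X ^ m : ℤ⟦X⟧) ^ 24) := by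
  intro N
  induction N with
  | zero => intro h; rw [Nat.le_zero.mp h]
  | succ N ih =>
    intro h
    rcases eq_or_lt_of_le h with rfl | h'
    · rfl
    · rw [Finset.prod_Icc_succ_top (by omega), coeff_mul_drop (by omega), ih (by omega)]

lemma Dprod (s : Finset ℕ) (f : ℕ → ℤ⟦X⟧) :
    d⁄dX ℤ (∏ m ∈ s, f m) = ∑ m ∈ s, (∏ k ∈ s.erase m, f k) * d⁄dX ℤ (f m) := by
  induction s using Finset.induction with
  | empty => simp
  | @insert a s ha ih =>
    rw [Finset.prod_insert ha, Derivation.leibniz, smul_eq_mul, smul_eq_mul, ih,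
      Finset.mul_sum, Finset.sum_insert ha, Finset.erase_insert ha]
    rw [add_comm]
    congr 1
    refine Finset.sum_congr rfl fun m hm => ?_
    rw [Finset.erase_insert_of_ne (by rintro rfl; exact ha hm), Finset.prod_insert
      (fun h => ha (Finset.erase_subset _ _ h))]
    ring

lemma XD_one_sub (m : ℕ) (hm : 0 < m) :
    X * d⁄dX ℤ ((1 : ℤ⟦X⟧) - X ^ m) = PowerSeries.C (R := ℤ) (-(m : ℤ)) * X ^ m := by
  ext k
  rcases k with _ | k
  · simp [PowerSeries.coeff_zero_eq_constantCoeff, hm.ne']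
  · rw [PowerSeries.coeff_succ_X_mul, PowerSeries.coeff_derivative, PowerSeries.coeff_C_mul,
      map_sub, PowerSeries.coeff_one, if_neg (Nat.succ_ne_zero k)]
    simp only [PowerSeries.coeff_X_pow]
    split
    · next h => rw [← h]; push_cast; ring
    · ring

noncomputable def F (n : ℕ) : ℤ⟦X⟧ := ∏ m ∈ Icc 1 n, (1 - X ^ m) ^ 24

lemma F_def (n : ℕ) : F n = ∏ m ∈ Icc 1 n, (1 - X ^ m : ℤ⟦X⟧) ^ 24 := rfl

noncomputable def G (n : ℕ) : ℤ⟦X⟧ :=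
  ∑ m ∈ Icc 1 n, PowerSeries.C (R := ℤ) (-(24 * (m : ℤ))) * (X ^ m * Sgeo m)

lemma XDF (n : ℕ) : X * d⁄dX ℤ (F n) = F n * G n := by
  rw [F, G, Dprod, Finset.mul_sum, Finset.mul_sum]
  refine Finset.sum_congr rfl fun m hm => ?_
  have hm1 : 0 < m := (Finset.mem_Icc.mp hm).1
  have hpow : d⁄dX ℤ (((1 : ℤ⟦X⟧) - X ^ m) ^ 24)
      = 24 * (((1 : ℤ⟦X⟧) - X ^ m) ^ 23 * d⁄dX ℤ ((1 : ℤ⟦X⟧) - X ^ m)) := by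
    rw [Derivation.leibniz_pow, smul_eq_mul, nsmul_eq_mul]
    norm_num
  have hC : PowerSeries.C (R := ℤ) (-(24 * (m : ℤ))) = 24 * PowerSeries.C (R := ℤ) (-(m : ℤ)) := by
    have : (-(24 * (m : ℤ))) = 24 * (-(m : ℤ)) := by ring
    rw [this, _root_.map_mul, map_ofNat]
  rw [hpow, hC, ← Finset.prod_erase_mul (Icc 1 n) _ hm]
  have key : X * ((∏ k ∈ (Icc 1 n).erase m, ((1 : ℤ⟦X⟧) - X ^ k) ^ 24) *
        (24 * (((1 : ℤ⟦X⟧) - X ^ m) ^ 23 * d⁄dX ℤ ((1 : ℤ⟦X⟧) - X ^ m))))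
      = (∏ k ∈ (Icc 1 n).erase m, ((1 : ℤ⟦X⟧) - X ^ k) ^ 24) *
        (24 * ((1 - X ^ m) ^ 23 * (X * d⁄dX ℤ ((1 : ℤ⟦X⟧) - X ^ m)))) := by ring
  rw [key, XD_one_sub m hm1]
  linear_combination (-((∏ k ∈ (Icc 1 n).erase m, ((1 : ℤ⟦X⟧) - X ^ k) ^ 24) *
    (24 * (PowerSeries.C (R := ℤ) (-(m : ℤ)) * X ^ m * (1 - X ^ m) ^ 23))) *
      (one_sub_pow_mul_Sgeo hm1))

lemma coeff_G_zero (n : ℕ) : (PowerSeries.coeff (R := ℤ) 0) (G n) = 0 := by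
  rw [G, map_sum]
  refine Finset.sum_eq_zero fun m hm => ?_
  have hm1 : 0 < m := (Finset.mem_Icc.mp hm).1
  rw [PowerSeries.coeff_C_mul, coeff_X_pow_mul', if_neg (by omega), mul_zero]

lemma coeff_G (n j : ℕ) (hj1 : 0 < j) (hjn : j ≤ n) :
    (PowerSeries.coeff (R := ℤ) j) (G n) = -24 * ∑ d ∈ Nat.divisors j, (d : ℤ) := by
  rw [G, map_sum]
  have step : ∀ m ∈ Icc 1 n,
      (PowerSeries.coeff (R := ℤ) j) (PowerSeries.C (R := ℤ) (-(24 * (m : ℤ))) * (X ^ m * Sgeo m))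
        = if m ∣ j then -24 * (m : ℤ) else 0 := by
    intro m hm
    have hm1 : 0 < m := (Finset.mem_Icc.mp hm).1
    rw [PowerSeries.coeff_C_mul, coeff_X_pow_mul']
    by_cases hmj : m ≤ j
    · rw [if_pos hmj]
      have hiff : m ∣ j ↔ m ∣ j - m := by
        constructor
        · intro h; exact Nat.dvd_sub h dvd_rfl
        · intro h; have := Nat.dvd_add h (dvd_refl m); rwa [Nat.sub_add_cancel hmj] at this
      simp only [Sgeo, coeff_mk]
      by_cases hd : m ∣ j
      · rw [if_pos (hiff.mp hd), if_pos hd]; ring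
      · rw [if_neg (fun hh => hd (hiff.mpr hh)), if_neg hd]; ring
    · rw [if_neg hmj, if_neg (fun hd => hmj (Nat.le_of_dvd hj1 hd)), mul_zero]
  rw [Finset.sum_congr rfl step, Finset.sum_ite, Finset.sum_const_zero, add_zero]
  have hset : (Icc 1 n).filter (· ∣ j) = Nat.divisors j := by
    ext m
    simp only [Finset.mem_filter, Finset.mem_Icc, Nat.mem_divisors]
    constructor
    · rintro ⟨⟨h1, _⟩, hd⟩; exact ⟨hd, hj1.ne'⟩
    · rintro ⟨hd, _⟩
      exact ⟨⟨Nat.one_le_iff_ne_zero.mpr (by rintro rfl; simp at hd; omega),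
        le_trans (Nat.le_of_dvd hj1 hd) hjn⟩, hd⟩
  rw [hset, Finset.mul_sum]

lemma keyrec (tau : ℕ → ℤ)
    (hco : ∀ i N, i ≤ N → (PowerSeries.coeff (R := ℤ) i) (F N) = tau (i + 1)) (n : ℕ) :
    (n : ℤ) * tau (n + 1)
      = -24 * ∑ j ∈ range n, (∑ d ∈ Nat.divisors (n - j), (d : ℤ)) * tau (j + 1) := by
  cases n with
  | zero => simp
  | succ t =>
    have h := congrArg (PowerSeries.coeff (R := ℤ) (t + 1)) (XDF (t + 1))
    rw [PowerSeries.coeff_succ_X_mul, PowerSeries.coeff_derivative, PowerSeries.coeff_mul,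
      Finset.Nat.sum_antidiagonal_eq_sum_range_succ_mk] at h
    have h2 : ∀ k ∈ range (t + 1),
        (PowerSeries.coeff (R := ℤ) k) (F (t + 1)) * (PowerSeries.coeff (R := ℤ) (t + 1 - k)) (G (t + 1))
          = tau (k + 1) * (-24 * ∑ d ∈ Nat.divisors (t + 1 - k), (d : ℤ)) := by
      intro k hk
      have hk' : k < t + 1 := Finset.mem_range.mp hk
      rw [hco k (t + 1) (by omega), coeff_G (t + 1) (t + 1 - k) (by omega) (by omega)]
    rw [sum_range_succ, Nat.sub_self, coeff_G_zero, mul_zero, add_zero,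
      Finset.sum_congr rfl h2, hco (t + 1) (t + 1) le_rfl] at h
    have h3 : ∑ j ∈ range (t + 1), (-24 * ((∑ d ∈ Nat.divisors (t + 1 - j), (d : ℤ)) * tau (j + 1)))
        = ∑ j ∈ range (t + 1), tau (j + 1) * (-24 * ∑ d ∈ Nat.divisors (t + 1 - j), (d : ℤ)) :=
      Finset.sum_congr rfl fun j _ => by ring
    rw [Finset.mul_sum, h3, ← h]
    push_cast
    ring

noncomputable def A (n : ℕ) : Matrix (Fin n) (Fin n) ℚ :=
  Matrix.of fun i j : Fin n =>
    if (j : ℕ) ≤ (i : ℕ) then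
      24 * ((∑ d ∈ Nat.divisors ((i : ℕ) - (j : ℕ) + 1), d : ℕ) : ℚ)
    else if (j : ℕ) = (i : ℕ) + 1 then ((i : ℕ) + 1 : ℚ)
    else 0

lemma prod_cast_factorial (t : ℕ) : ∏ i ∈ range t, ((i : ℚ) + 1) = (t.factorial : ℚ) := by
  induction t with
  | zero => simp
  | succ t ih => rw [prod_range_succ, ih, Nat.factorial_succ]; push_cast; ring

lemma det_A (t : ℕ) (a : ℕ → ℚ) (ha0 : a 0 = 1)
    (hrec : ∀ N : ℕ, (N : ℚ) * a N
      = -24 * ∑ j ∈ range N, ((∑ d ∈ Nat.divisors (N - j), d : ℕ) : ℚ) * a j) :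
    (A (t + 1)).det = (-1 : ℚ) ^ (t + 1) * ((t + 1).factorial : ℚ) * a (t + 1) := by
  set n := t + 1 with hn
  set x : Fin n → ℚ := fun j => a (j : ℕ) with hx
  set c : ℚ := -((n : ℚ) * a n) with hc
  set g : ℕ → ℕ → ℚ := fun i j =>
    (if j ≤ i then 24 * ((∑ d ∈ Nat.divisors (i - j + 1), d : ℕ) : ℚ)
      else if j = i + 1 then (i + 1 : ℚ) else 0) * a j with hg
  have hpart : ∀ i : ℕ, ∑ j ∈ range (i + 1), g i j = -(((i + 1 : ℕ) : ℚ) * a (i + 1)) := by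
    intro i
    have e1 : ∀ j ∈ range (i + 1), g i j
        = 24 * (((∑ d ∈ Nat.divisors ((i + 1) - j), d : ℕ) : ℚ) * a j) := by
      intro j hj
      have hj' : j ≤ i := by have := Finset.mem_range.mp hj; omega
      have h2 : i - j + 1 = i + 1 - j := by omega
      rw [hg]
      simp only []
      rw [if_pos hj', h2]
      ring
    rw [Finset.sum_congr rfl e1, ← Finset.mul_sum]
    have := hrec (i + 1)
    push_cast at this ⊢
    linarith
  have hrow : A n *ᵥ x = c • (Pi.single (Fin.last t) 1 : Fin n → ℚ) := by
    funext i
    have hsum : (A n *ᵥ x) i = ∑ j ∈ range n, g (i : ℕ) j := by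
      rw [Matrix.mulVec, dotProduct, ← Fin.sum_univ_eq_sum_range (g (i : ℕ))]
      exact Finset.sum_congr rfl fun j _ => rfl
    have hival : (i : ℕ) < n := i.isLt
    rcases eq_or_lt_of_le (Nat.succ_le_of_lt hival) with heq | hlt
    · -- i is the last row
      have hilast : i = Fin.last t := by
        apply Fin.ext; simp only [Fin.val_last]; omega
      rw [hsum, hilast]
      simp only [Pi.smul_apply, Pi.single_eq_same, smul_eq_mul, mul_one, Fin.val_last]
      have : ∑ j ∈ range n, g t j = ∑ j ∈ range (t + 1), g t j := by rw [hn]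
      rw [this, hpart t, hc, hn]
    · -- i is not the last row
      have hine : i ≠ Fin.last t := by
        intro h
        have hv : (i : ℕ) = t := by rw [h]; exact Fin.val_last t
        omega
      rw [hsum, Pi.smul_apply, Pi.single_eq_of_ne hine, smul_zero]
      have hsub : ∑ j ∈ range n, g (i : ℕ) j = ∑ j ∈ range ((i : ℕ) + 2), g (i : ℕ) j := by
        symm
        apply Finset.sum_subset (Finset.range_subset_range.mpr (by omega))
        intro j hj hj2
        have h1 : ¬ j ≤ (i : ℕ) := by
          have := Finset.mem_range.mp hj; simp only [Finset.mem_range] at hj2; omega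
        have h2 : ¬ j = (i : ℕ) + 1 := by
          simp only [Finset.mem_range] at hj2; omega
        rw [hg]; simp only []; rw [if_neg h1, if_neg h2, zero_mul]
      rw [hsub, Finset.sum_range_succ, hpart]
      have hgl : g (i : ℕ) ((i : ℕ) + 1) = (((i : ℕ) + 1 : ℕ) : ℚ) * a ((i : ℕ) + 1) := by
        rw [hg]; simp only []
        rw [if_neg (by omega)]
        norm_num
      rw [hgl]; ring
  -- Cramer's rule
  have hcr : Matrix.cramer (A n) (c • (Pi.single (Fin.last t) 1 : Fin n → ℚ))
      = (A n).det • x := by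
    rw [← hrow, Matrix.cramer_eq_adjugate_mulVec, Matrix.mulVec_mulVec, Matrix.adjugate_mul,
      Matrix.smul_mulVec, Matrix.one_mulVec]
  have h0 : c * Matrix.cramer (A n) (Pi.single (Fin.last t) 1 : Fin n → ℚ) 0
      = (A n).det := by
    have h1 := congrFun hcr (0 : Fin n)
    rw [_root_.map_smul] at h1
    have h2 : x (0 : Fin n) = 1 := by
      rw [hx]
      show a ((0 : Fin n) : ℕ) = 1
      rw [Fin.val_zero, ha0]
    simpa [h2] using h1
  -- the triangular determinant
  have htri : Matrix.cramer (A n) (Pi.single (Fin.last t) 1 : Fin n → ℚ) 0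
      = (-1 : ℚ) ^ t * (t.factorial : ℚ) := by
    rw [Matrix.cramer_apply]
    rw [Matrix.det_succ_column_zero]
    rw [Finset.sum_eq_single (Fin.last t)]
    · rw [Matrix.updateCol_self, Pi.single_eq_same, Fin.val_last, mul_one]
      congr 1
      -- determinant of the lower-triangular minor
      set B := ((A n).updateCol 0 (Pi.single (Fin.last t) 1)).submatrix
        (Fin.last t).succAbove Fin.succ with hB
      have hentry : ∀ p q : Fin t, B p q
          = (if (q : ℕ) + 1 ≤ (p : ℕ) then
              24 * ((∑ d ∈ Nat.divisors ((p : ℕ) - ((q : ℕ) + 1) + 1), d : ℕ) : ℚ)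
            else if (q : ℕ) + 1 = (p : ℕ) + 1 then ((p : ℕ) + 1 : ℚ) else 0) := by
        intro p q
        rw [hB]
        rw [Matrix.submatrix_apply, Fin.succAbove_last,
          Matrix.updateCol_ne (Fin.succ_ne_zero q)]
        show (A n) p.castSucc q.succ = _
        rw [A, Matrix.of_apply]
        simp only [Fin.val_succ, Fin.coe_castSucc]
      have hlow : Matrix.BlockTriangular B OrderDual.toDual := by
        intro p q hpq
        have hpq' : (p : ℕ) < (q : ℕ) := hpq
        rw [hentry, if_neg (by omega), if_neg (by omega)]
      rw [Matrix.det_of_lowerTriangular B hlow]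
      have hdiag : ∀ p : Fin t, B p p = ((p : ℕ) : ℚ) + 1 := by
        intro p
        rw [hentry, if_neg (by omega), if_pos rfl]
      calc ∏ p : Fin t, B p p = ∏ p : Fin t, (fun q : ℕ => (q : ℚ) + 1) ((p : Fin t) : ℕ) :=
            Finset.prod_congr rfl fun p _ => hdiag p
        _ = ∏ p ∈ range t, ((p : ℚ) + 1) := by
            exact Fin.prod_univ_eq_prod_range (fun q : ℕ => (q : ℚ) + 1) t
        _ = (t.factorial : ℚ) := prod_cast_factorial t
    · intro q _ hq
      rw [Matrix.updateCol_self, Pi.single_eq_of_ne hq, mul_zero, zero_mul]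
    · intro h
      exact absurd (Finset.mem_univ _) h
  rw [← h0, htri, hc, hn]
  push_cast [Nat.factorial_succ]
  ring

end TauDeterminantAux

/-- Theorem 3.2: with `tau` Ramanujan's τ-function (coefficients of
`q·∏_{m≥1}(1-q^m)^{24}`, characterized via truncated products),
`τ(n+1) = ((-1)^n/n!)·det M` where `M` is the `n×n` matrix with (1-indexed) entries
`M_{i,j} = 24σ(i-j+1)` for `j ≤ i`, `M_{i,i+1} = i`, and `0` otherwise. -/
theorem tau_determinant
    (tau : ℕ → ℤ)
    (htau : ∀ N : ℕ,
      (PowerSeries.coeff (R := ℤ) N)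
        (PowerSeries.X * ∏ m ∈ Finset.Icc 1 N, (1 - PowerSeries.X ^ m) ^ 24) = tau N)
    (n : ℕ) :
    (tau (n + 1) : ℚ) = ((-1 : ℚ) ^ n / (n.factorial : ℚ)) *
      Matrix.det (Matrix.of fun i j : Fin n =>
        if (j : ℕ) ≤ (i : ℕ) then
          24 * ((∑ d ∈ Nat.divisors ((i : ℕ) - (j : ℕ) + 1), d : ℕ) : ℚ)
        else if (j : ℕ) = (i : ℕ) + 1 then ((i : ℕ) + 1 : ℚ)
        else 0) := by
  classical
  open TauDeterminantAux in
  have hco : ∀ i N : ℕ, i ≤ N → (PowerSeries.coeff (R := ℤ) i) (TauDeterminantAux.F N)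
      = tau (i + 1) := by
    intro i N hiN
    rw [TauDeterminantAux.F_def]
    calc (PowerSeries.coeff (R := ℤ) i) (∏ m ∈ Finset.Icc 1 N, (1 - PowerSeries.X ^ m : ℤ⟦X⟧) ^ 24)
        = (PowerSeries.coeff (R := ℤ) i)
            (∏ m ∈ Finset.Icc 1 i, (1 - PowerSeries.X ^ m : ℤ⟦X⟧) ^ 24) :=
          TauDeterminantAux.coeff_prod_stable i N hiN
      _ = (PowerSeries.coeff (R := ℤ) i)
            (∏ m ∈ Finset.Icc 1 (i + 1), (1 - PowerSeries.X ^ m : ℤ⟦X⟧) ^ 24) :=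
          (TauDeterminantAux.coeff_prod_stable i (i + 1) (Nat.le_succ i)).symm
      _ = (PowerSeries.coeff (R := ℤ) (i + 1))
            (PowerSeries.X * ∏ m ∈ Finset.Icc 1 (i + 1), (1 - PowerSeries.X ^ m : ℤ⟦X⟧) ^ 24) :=
          (PowerSeries.coeff_succ_X_mul i _).symm
      _ = tau (i + 1) := htau (i + 1)
  have htau1 : tau 1 = 1 := by
    have h1 := hco 0 0 le_rfl
    rw [TauDeterminantAux.F_def] at h1
    simpa using h1.symm
  set a : ℕ → ℚ := fun N => (tau (N + 1) : ℚ) with haq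
  have ha0 : a 0 = 1 := by rw [haq]; simp [htau1]
  have hrec : ∀ N : ℕ, (N : ℚ) * a N
      = -24 * ∑ j ∈ Finset.range N, ((∑ d ∈ Nat.divisors (N - j), d : ℕ) : ℚ) * a j := by
    intro N
    have h := TauDeterminantAux.keyrec tau hco N
    have h2 := congrArg (fun z : ℤ => (z : ℚ)) h
    push_cast at h2 ⊢
    convert h2 using 2
  cases n with
  | zero =>
    simp [Matrix.det_fin_zero, htau1]
  | succ t =>
    have hdet := TauDeterminantAux.det_A t a ha0 hrec
    have hAe : (TauDeterminantAux.A (t + 1)) = (Matrix.of fun i j : Fin (t + 1) =>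
        if (j : ℕ) ≤ (i : ℕ) then
          24 * ((∑ d ∈ Nat.divisors ((i : ℕ) - (j : ℕ) + 1), d : ℕ) : ℚ)
        else if (j : ℕ) = (i : ℕ) + 1 then ((i : ℕ) + 1 : ℚ)
        else 0) := rfl
    rw [hAe] at hdet
    rw [hdet]
    have hfact : (((t + 1).factorial : ℚ)) ≠ 0 :=
      Nat.cast_ne_zero.mpr (Nat.factorial_ne_zero _)
    rw [haq]
    field_simp
    have hsq : ((-1 : ℚ)) ^ (t + 1) * (-1) ^ (t + 1) = 1 := by
      rw [← pow_add]
      exact Even.neg_one_pow ⟨t + 1, by ring⟩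
    linear_combination (-(tau (t + 1 + 1) : ℚ)) * hsq
end
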